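/- arXiv:2101.11324 — 2 statements merged into one kernel-verified Lean document; each statement's English description precedes it below -/
import Mathlib

section
/- For t > 0 define the reachable set R̄_{[-t,0]} = { e^{tA}z + ∫_{-t}^0 e^{-σA} B u(σ) dσ : z ∈ H, u ∈ L²(-t,0;U) }. Then R̄_{[-t,0]} ⊆ H; moreover, if the null controllability hypothesis holds, then R̄_{[-t,0]} = H for every t ≥ T₀. -/
open MeasureTheory Filter Topology Set ContinuousLinearMap
open scoped ENNReal NNReal

noncomputable section

local notation "⟪" x ", " y "⟫" => @inner ℝ _ _ x y

variable {X U : Type*}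
  [NormedAddCommGroup X] [InnerProductSpace ℝ X] [CompleteSpace X]
  [NormedAddCommGroup U] [InnerProductSpace ℝ U] [CompleteSpace U]
  [TopologicalSpace.SeparableSpace X] [TopologicalSpace.SeparableSpace U]

/-- A C₀-semigroup `S` on `X` with decay bound `‖S t‖ ≤ M e^{-ω t}`. -/
structure IsC0SemigroupDecay (S : ℝ → X →L[ℝ] X) (M ω : ℝ) : Prop where
  map_zero : S 0 = ContinuousLinearMap.id ℝ X
  map_add : ∀ s t : ℝ, 0 ≤ s → 0 ≤ t → S (s + t) = (S s).comp (S t)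
  strong_cont : ∀ x : X, ContinuousOn (fun t => S t x) (Ici (0:ℝ))
  M_pos : 0 < M
  omega_pos : 0 < ω
  norm_le : ∀ t : ℝ, 0 ≤ t → ‖S t‖ ≤ M * Real.exp (-ω * t)

/-- The controllability operator `Q_t x = ∫_0^t e^{rA} B B* e^{rA*} x dr`. -/
def Qop (S : ℝ → X →L[ℝ] X) (B : U →L[ℝ] X) (t : ℝ) (x : X) : X :=
  ∫ r in Ioc (0:ℝ) t, S r (B (adjoint B (adjoint (S r) x)))

/-- The controllability operator `Q_∞ x = ∫_0^∞ e^{rA} B B* e^{rA*} x dr`. -/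
def QopInf (S : ℝ → X →L[ℝ] X) (B : U →L[ℝ] X) (x : X) : X :=
  ∫ r in Ioi (0:ℝ), S r (B (adjoint B (adjoint (S r) x)))

/-- `T` is the (nonnegative selfadjoint) square root of `Q`. -/
def IsSqrtOf (T Q : X →L[ℝ] X) : Prop :=
  IsSelfAdjoint T ∧ (∀ x : X, (0:ℝ) ≤ ⟪T x, x⟫) ∧ T.comp T = Q

/-- `Qih` is the pseudoinverse of `Qh`: for `y` in the range of `Qh`, `Qih y` is the unique
element of `(ker Qh)ᗮ` mapped by `Qh` to `y`. -/
def IsPseudoInvOf (Qih : X → X) (Qh : X →L[ℝ] X) : Prop :=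
  ∀ y ∈ Set.range Qh, Qih y ∈ (LinearMap.ker (Qh : X →ₗ[ℝ] X))ᗮ ∧ Qh (Qih y) = y

/-- The inner product of the space `H = R(Q_∞^{1/2})`, expressed through the pseudoinverse
`Qih` of `Q_∞^{1/2}`. -/
def hInner (Qih : X → X) (x y : X) : ℝ := ⟪Qih x, Qih y⟫

/-- `A` (with domain `domA`) is the infinitesimal generator of the semigroup `S`. -/
def IsGenerator (S : ℝ → X →L[ℝ] X) (domA : Set X) (A : X → X) : Prop :=
  (∀ x : X, x ∈ domA ↔
      ∃ y : X, Tendsto (fun h : ℝ => h⁻¹ • (S h x - x)) (𝓝[>] (0:ℝ)) (𝓝 y)) ∧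
  ∀ x ∈ domA, Tendsto (fun h : ℝ => h⁻¹ • (S h x - x)) (𝓝[>] (0:ℝ)) (𝓝 (A x))

/-- `P` is a bounded nonnegative selfadjoint operator on `H` (viewed as a map `X → X`
defined on the subset `Hs` of `X`, with `H`-inner product induced by `Qih`). -/
def IsBddNonnegSelfAdjH (Qih : X → X) (Hs : Set X) (P : X → X) : Prop :=
  (∀ x ∈ Hs, P x ∈ Hs) ∧
  (∀ x ∈ Hs, ∀ y ∈ Hs, P (x + y) = P x + P y) ∧
  (∀ (c : ℝ), ∀ x ∈ Hs, P (c • x) = c • P x) ∧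
  (∃ C : ℝ, ∀ x ∈ Hs, ‖Qih (P x)‖ ≤ C * ‖Qih x‖) ∧
  (∀ x ∈ Hs, ∀ y ∈ Hs, hInner Qih (P x) y = hInner Qih x (P y)) ∧
  (∀ x ∈ Hs, 0 ≤ hInner Qih (P x) x)

/-- The set of controls `u ∈ L²(-t,0;U)` steering `0` (at time `-t`) to `x` (at time `0`). -/
def Adm (S : ℝ → X →L[ℝ] X) (B : U →L[ℝ] X) (t : ℝ) (u : ℝ → U) (x : X) : Prop :=
  MemLp u 2 (volume.restrict (Ioc (-t) (0:ℝ))) ∧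
    (∫ σ in Ioc (-t) (0:ℝ), S (-σ) (B (u σ))) = x

/-- The set of controls `u ∈ L²(-∞,0;U)` steering `0` (at time `-∞`) to `x` (at time `0`). -/
def AdmInf (S : ℝ → X →L[ℝ] X) (B : U →L[ℝ] X) (u : ℝ → U) (x : X) : Prop :=
  MemLp u 2 (volume.restrict (Iic (0:ℝ))) ∧
    (∫ τ in Iic (0:ℝ), S (-τ) (B (u τ))) = x

/-- The finite-horizon minimum energy `V(t,x)` (with value `⊤` when no admissible control). -/
def Vfin (S : ℝ → X →L[ℝ] X) (B : U →L[ℝ] X) (t : ℝ) (x : X) : ℝ≥0∞ :=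
  sInf {c : ℝ≥0∞ | ∃ u : ℝ → U, Adm S B t u x ∧
    c = ENNReal.ofReal (2⁻¹ * ∫ s in Ioc (-t) (0:ℝ), ‖u s‖ ^ 2)}

/-- The infinite-horizon minimum energy `V_∞(x)`. -/
def Vinf (S : ℝ → X →L[ℝ] X) (B : U →L[ℝ] X) (x : X) : ℝ≥0∞ :=
  sInf {c : ℝ≥0∞ | ∃ u : ℝ → U, AdmInf S B u x ∧
    c = ENNReal.ofReal (2⁻¹ * ∫ s in Iic (0:ℝ), ‖u s‖ ^ 2)}

/-- The value function `V^N(t,x)` of the auxiliary problem with initial cost operator `N`. -/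
def VN (S : ℝ → X →L[ℝ] X) (B : U →L[ℝ] X) (Qih : X → X) (Hs : Set X)
    (N : X → X) (t : ℝ) (x : X) : ℝ≥0∞ :=
  sInf {c : ℝ≥0∞ | ∃ z ∈ Hs, ∃ u : ℝ → U,
    MemLp u 2 (volume.restrict (Ioc (-t) (0:ℝ))) ∧
    S t z + (∫ σ in Ioc (-t) (0:ℝ), S (-σ) (B (u σ))) = x ∧
    c = ENNReal.ofReal (2⁻¹ * hInner Qih (N z) z + 2⁻¹ * ∫ s in Ioc (-t) (0:ℝ), ‖u s‖ ^ 2)}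

/-- The domain of `Λ_P`: those `x ∈ H` with `P x ∈ R(Q_∞)`. -/
def domLambda (Qinf : X →L[ℝ] X) (Hs : Set X) (P : X → X) : Set X :=
  {x ∈ Hs | P x ∈ Set.range Qinf}

/-- `P` belongs to the class `𝒬`: some `D ⊆ D(Λ_P) ∩ D(A)` is dense in `D(A) ∩ H`
w.r.t. the norm `‖·‖_H + ‖A·‖_X`. -/
def InClassQ (domA : Set X) (A : X → X) (Qih : X → X) (Qinf : X →L[ℝ] X)
    (Hs : Set X) (P : X → X) : Prop :=
  ∃ D : Set X, D ⊆ domLambda Qinf Hs P ∧ D ⊆ domA ∧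
    ∀ x ∈ domA ∩ Hs, ∀ ε > (0:ℝ), ∃ z ∈ D, ‖Qih (x - z)‖ + ‖A x - A z‖ < ε

/-- `P` is a solution of the algebraic Riccati equation in `H`:
`D(A) ∩ D(Λ_P)` is dense in `H` and
`0 = -⟨Ax, Λ_P y⟩_X - ⟨Λ_P x, Ay⟩_X - ⟨B*Λ_P x, B*Λ_P y⟩_U` on `D(A) ∩ D(Λ_P)`,
where `Λ_P = Q_∞^{-1} P` is realized through the pseudoinverse `Qi` of `Q_∞`. -/
def IsAREsolH (B : U →L[ℝ] X) (domA : Set X) (A : X → X) (Qih Qi : X → X)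
    (Qinf : X →L[ℝ] X) (Hs : Set X) (P : X → X) : Prop :=
  (∀ x ∈ Hs, ∀ ε > (0:ℝ), ∃ z ∈ domA ∩ domLambda Qinf Hs P, ‖Qih (x - z)‖ < ε) ∧
  ∀ x ∈ domA ∩ domLambda Qinf Hs P, ∀ y ∈ domA ∩ domLambda Qinf Hs P,
    (0:ℝ) = -⟪A x, Qi (P y)⟫ - ⟪Qi (P x), A y⟫ - ⟪adjoint B (Qi (P x)), adjoint B (Qi (P y))⟫

/-!
The map `(u, z) ↦ ∫_{-t}^0 e^{-σA} B u(σ) dσ + e^{tA} Q_∞^{1/2} z` on `L²(-t,0;U) × X` has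
range `R̄_{[-t,0]}`, and its adjoint is `x ↦ (B* e^{-σA*} x, Q_∞^{1/2} e^{tA*} x)`. Splitting the
integral defining `Q_∞` at `t` gives `Q_∞ = Q_t + e^{tA} Q_∞ e^{tA*}`, so this adjoint has the same
norm as `Q_∞^{1/2}` at every `x`. By Douglas' lemma, operators whose adjoints have pointwise equal
norms have equal ranges; hence `R̄_{[-t,0]} = R(Q_∞^{1/2}) = H`.

The adjoint semigroup is only weakly continuous, so the integrands are measurable by Pettis'
theorem.
-/

theorem aestronglyMeasurable_of_aemeasurable_inner {E α : Type*} [NormedAddCommGroup E]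
    [InnerProductSpace ℝ E] [CompleteSpace E] [TopologicalSpace.SeparableSpace E]
    [MeasurableSpace α] {μ : Measure α} {f : α → E}
    (hf : ∀ v : E, AEMeasurable (fun a => ⟪f a, v⟫) μ) : AEStronglyMeasurable f μ := by
  let : MeasurableSpace E := borel E
  have : BorelSpace E := ⟨rfl⟩
  obtain ⟨d, hd⟩ : ∃ d : ℕ → E, DenseRange d := TopologicalSpace.exists_dense_seq E
  have hinj : Function.Injective fun (x : E) (n : ℕ) => ⟪x, d n⟫ := fun x y hxy =>
    ext_inner_right ℝ <| congrFun <| hd.equalizer (continuous_const.inner continuous_id)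
      (continuous_const.inner continuous_id) (funext fun n => congrFun hxy n)
  -- Pettis: a continuous injection of a Polish space is a measurable embedding (Lusin–Souslin).
  have hemb := (continuous_pi fun n => continuous_id.inner continuous_const).measurableEmbedding
    hinj
  exact (hemb.aemeasurable_comp_iff.1
    (aemeasurable_pi_lambda _ fun n => hf (d n))).aestronglyMeasurable

theorem exists_apply_eq_of_abs_inner_le {E K : Type*}
    [NormedAddCommGroup E] [InnerProductSpace ℝ E]
    [NormedAddCommGroup K] [InnerProductSpace ℝ K] [CompleteSpace K]
    (g : E →ₗ[ℝ] K) (h : K → E) (hgh : ∀ k x, ⟪h k, x⟫ = ⟪k, g x⟫)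
    {y : E} {C : ℝ} (hy : ∀ x, |⟪y, x⟫| ≤ C * ‖g x‖) : y ∈ range h := by
  -- `⟪y, ·⟫` factors through `g` to a bounded functional on `range g`: extend it by Hahn–Banach
  -- and represent the extension by the Riesz theorem.
  have hker : LinearMap.ker g ≤ LinearMap.ker (innerₗ E y) := fun x hx => by
    simpa [show g x = 0 from hx] using hy x
  let f₀ : LinearMap.range g →ₗ[ℝ] ℝ :=
    (LinearMap.ker g).liftQ (innerₗ E y) hker ∘ₗ (g.quotKerEquivRange.symm : _ →ₗ[ℝ] _)
  have hf₀ : ∀ x, f₀ ⟨g x, LinearMap.mem_range_self g x⟩ = ⟪y, x⟫ := fun x => by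
    have : g.quotKerEquivRange.symm ⟨g x, LinearMap.mem_range_self g x⟩ =
        Submodule.Quotient.mk x :=
      g.quotKerEquivRange.symm_apply_eq.2 (Subtype.ext (g.quotKerEquivRange_apply_mk x).symm)
    simp [f₀, this]
  have hbound : ∀ v : LinearMap.range g, ‖f₀ v‖ ≤ C * ‖v‖ := by
    rintro ⟨_, x, rfl⟩
    simpa [hf₀] using hy x
  obtain ⟨F, hF, -⟩ := exists_extension_norm_eq (LinearMap.range g) (f₀.mkContinuous C hbound)
  refine ⟨(InnerProductSpace.toDual ℝ K).symm F, ext_inner_right ℝ fun x => ?_⟩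
  rw [hgh, InnerProductSpace.toDual_symm_apply, hF ⟨g x, LinearMap.mem_range_self g x⟩]
  exact hf₀ x

section Douglas

variable {E K₁ K₂ : Type*} [NormedAddCommGroup E] [InnerProductSpace ℝ E]
  [NormedAddCommGroup K₁] [InnerProductSpace ℝ K₁]
  [NormedAddCommGroup K₂] [InnerProductSpace ℝ K₂] [CompleteSpace K₂]

theorem range_subset_range_of_norm_le (g₁ : E →ₗ[ℝ] K₁) (h₁ : K₁ → E)
    (hgh₁ : ∀ k x, ⟪h₁ k, x⟫ = ⟪k, g₁ x⟫) (g₂ : E →ₗ[ℝ] K₂) (h₂ : K₂ → E)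
    (hgh₂ : ∀ k x, ⟪h₂ k, x⟫ = ⟪k, g₂ x⟫) (hg : ∀ x, ‖g₁ x‖ ≤ ‖g₂ x‖) :
    range h₁ ⊆ range h₂ := by
  rintro _ ⟨k, rfl⟩
  refine exists_apply_eq_of_abs_inner_le g₂ h₂ hgh₂ (C := ‖k‖) fun x => ?_
  rw [hgh₁]
  exact (abs_real_inner_le_norm k (g₁ x)).trans (by gcongr; exact hg x)

theorem range_eq_range_of_norm_eq [CompleteSpace K₁] (g₁ : E →ₗ[ℝ] K₁) (h₁ : K₁ → E)
    (hgh₁ : ∀ k x, ⟪h₁ k, x⟫ = ⟪k, g₁ x⟫) (g₂ : E →ₗ[ℝ] K₂) (h₂ : K₂ → E)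
    (hgh₂ : ∀ k x, ⟪h₂ k, x⟫ = ⟪k, g₂ x⟫) (hg : ∀ x, ‖g₁ x‖ = ‖g₂ x‖) :
    range h₁ = range h₂ :=
  (range_subset_range_of_norm_le g₁ h₁ hgh₁ g₂ h₂ hgh₂ fun x => (hg x).le).antisymm
    (range_subset_range_of_norm_le g₂ h₂ hgh₂ g₁ h₁ hgh₁ fun x => (hg x).ge)

end Douglas

section Semigroup

variable {E F : Type*} [NormedAddCommGroup E] [InnerProductSpace ℝ E] {S : ℝ → E →L[ℝ] E}
  {M ω : ℝ}

theorem IsC0SemigroupDecay.norm_le_const (hS : IsC0SemigroupDecay S M ω) {r : ℝ} (hr : 0 ≤ r) :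
    ‖S r‖ ≤ M := by
  refine (hS.norm_le r hr).trans (mul_le_of_le_one_right hS.M_pos.le (Real.exp_le_one_iff.2 ?_))
  nlinarith [hS.omega_pos]

variable [CompleteSpace E] [NormedAddCommGroup F] [InnerProductSpace ℝ F] [CompleteSpace F]
  {B : F →L[ℝ] E}

def observation (S : ℝ → E →L[ℝ] E) (B : F →L[ℝ] E) (x : E) (r : ℝ) : F :=
  adjoint B (adjoint (S r) x)

theorem inner_observation (x : E) (r : ℝ) (e : F) :
    ⟪observation S B x r, e⟫ = ⟪x, S r (B e)⟫ := by
  rw [observation, adjoint_inner_left, adjoint_inner_left]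

theorem norm_observation_le (x : E) (r : ℝ) :
    ‖observation S B x r‖ ≤ ‖B‖ * (‖S r‖ * ‖x‖) :=
  calc ‖observation S B x r‖ ≤ ‖adjoint B‖ * (‖adjoint (S r)‖ * ‖x‖) :=
        (le_opNorm _ _).trans (by gcongr; exact le_opNorm _ _)
    _ = ‖B‖ * (‖S r‖ * ‖x‖) := by simp only [LinearIsometryEquiv.norm_map]

theorem IsC0SemigroupDecay.observation_adjoint_apply (hS : IsC0SemigroupDecay S M ω) (x : E)
    {t r : ℝ} (ht : 0 ≤ t) (hr : 0 ≤ r) :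
    observation S B (adjoint (S t) x) r = observation S B x (t + r) := by
  simp only [observation, hS.map_add t r ht hr, adjoint_comp, comp_apply]

theorem IsC0SemigroupDecay.integral_observation_adjoint_sq (hS : IsC0SemigroupDecay S M ω)
    (x : E) {t : ℝ} (ht : 0 ≤ t) :
    ∫ r in Ioi 0, ‖observation S B (adjoint (S t) x) r‖ ^ 2
      = ∫ r in Ioi t, ‖observation S B x r‖ ^ 2 := by
  rw [setIntegral_congr_fun measurableSet_Ioi fun r hr => by
    rw [hS.observation_adjoint_apply x ht (le_of_lt hr)]]
  have := (measurePreserving_add_left volume t).setIntegral_preimage_emb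
    (MeasurableEquiv.addLeft t).measurableEmbedding (fun r => ‖observation S B x r‖ ^ 2) (Ioi t)
  rwa [preimage_const_add_Ioi, sub_self] at this

theorem integral_observation_neg_sq (x : E) {t : ℝ} (ht : 0 ≤ t) :
    ∫ σ in Ioc (-t) 0, ‖observation S B x (-σ)‖ ^ 2
      = ∫ r in Ioc 0 t, ‖observation S B x r‖ ^ 2 := by
  rw [← intervalIntegral.integral_of_le (neg_nonpos.2 ht), ← intervalIntegral.integral_of_le ht,
    intervalIntegral.integral_comp_neg (fun r => ‖observation S B x r‖ ^ 2), neg_zero, neg_neg]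

theorem IsSqrtOf.inner_apply_self {T Q : E →L[ℝ] E} (h : IsSqrtOf T Q) (x : E) :
    ⟪Q x, x⟫ = ‖T x‖ ^ 2 := by
  rw [← h.2.2, comp_apply, ← adjoint_inner_right, h.1.adjoint_eq, real_inner_self_eq_norm_sq]

variable [TopologicalSpace.SeparableSpace E] {s : Set ℝ} {φ : ℝ → ℝ}

theorem IsC0SemigroupDecay.aestronglyMeasurable_adjoint_apply (hS : IsC0SemigroupDecay S M ω)
    (hs : MeasurableSet s) (hφ : ContinuousOn φ s) (hφs : MapsTo φ s (Ici 0)) (x : E) :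
    AEStronglyMeasurable (fun r => adjoint (S (φ r)) x) (volume.restrict s) :=
  aestronglyMeasurable_of_aemeasurable_inner fun v => by
    simp_rw [adjoint_inner_left]
    exact (continuousOn_const.inner ((hS.strong_cont v).comp hφ hφs)).aemeasurable hs

theorem IsC0SemigroupDecay.aestronglyMeasurable_apply (hS : IsC0SemigroupDecay S M ω)
    (hs : MeasurableSet s) (hφ : ContinuousOn φ s) (hφs : MapsTo φ s (Ici 0)) {v : ℝ → E}
    (hv : AEStronglyMeasurable v (volume.restrict s)) :
    AEStronglyMeasurable (fun r => S (φ r) (v r)) (volume.restrict s) :=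
  aestronglyMeasurable_of_aemeasurable_inner fun y => by
    simp_rw [← adjoint_inner_right]
    exact (hv.inner (hS.aestronglyMeasurable_adjoint_apply hs hφ hφs y)).aemeasurable

theorem IsC0SemigroupDecay.aestronglyMeasurable_observation (hS : IsC0SemigroupDecay S M ω)
    (hs : MeasurableSet s) (hφ : ContinuousOn φ s) (hφs : MapsTo φ s (Ici 0)) (x : E) :
    AEStronglyMeasurable (fun r => observation S B x (φ r)) (volume.restrict s) :=
  (adjoint B).continuous.comp_aestronglyMeasurable
    (hS.aestronglyMeasurable_adjoint_apply hs hφ hφs x)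

theorem IsC0SemigroupDecay.integrable_apply (hS : IsC0SemigroupDecay S M ω)
    (hs : MeasurableSet s) (hφ : ContinuousOn φ s) (hφs : MapsTo φ s (Ici 0)) {v : ℝ → E}
    (hv : Integrable v (volume.restrict s)) :
    Integrable (fun r => S (φ r) (v r)) (volume.restrict s) := by
  refine Integrable.mono' (hv.norm.const_mul M)
    (hS.aestronglyMeasurable_apply hs hφ hφs hv.aestronglyMeasurable) ?_
  filter_upwards [ae_restrict_mem hs] with r hr
  exact (le_opNorm _ _).trans (by gcongr; exact hS.norm_le_const (hφs hr))

theorem IsC0SemigroupDecay.integrableOn_observation (hS : IsC0SemigroupDecay S M ω) (x : E) :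
    IntegrableOn (observation S B x) (Ioi 0) := by
  refine Integrable.mono' ((exp_neg_integrableOn_Ioi 0 hS.omega_pos).const_mul (‖B‖ * M * ‖x‖))
    (hS.aestronglyMeasurable_observation measurableSet_Ioi continuousOn_id
      (fun _ h => mem_Ici.2 (le_of_lt h)) x) ?_
  filter_upwards [ae_restrict_mem measurableSet_Ioi] with r hr
  calc ‖observation S B x r‖ ≤ ‖B‖ * (M * Real.exp (-ω * r) * ‖x‖) :=
        (norm_observation_le x r).trans (by gcongr; exact hS.norm_le r (le_of_lt hr))
    _ = ‖B‖ * M * ‖x‖ * Real.exp (-ω * r) := by ring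

theorem IsC0SemigroupDecay.integrableOn_QopInf_integrand (hS : IsC0SemigroupDecay S M ω)
    (x : E) : IntegrableOn (fun r => S r (B (observation S B x r))) (Ioi 0) :=
  hS.integrable_apply measurableSet_Ioi continuousOn_id (fun _ h => mem_Ici.2 (le_of_lt h))
    (B.integrable_comp (hS.integrableOn_observation x))

theorem IsC0SemigroupDecay.integrableOn_observation_sq (hS : IsC0SemigroupDecay S M ω) (x : E) :
    IntegrableOn (fun r => ‖observation S B x r‖ ^ 2) (Ioi 0) :=
  ((hS.integrableOn_QopInf_integrand x).const_inner x).congr <| ae_of_all _ fun r =>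
    (inner_observation x r _).symm.trans (real_inner_self_eq_norm_sq _)

theorem IsC0SemigroupDecay.inner_QopInf_self (hS : IsC0SemigroupDecay S M ω) (x : E) :
    ⟪QopInf S B x, x⟫ = ∫ r in Ioi 0, ‖observation S B x r‖ ^ 2 := by
  change ⟪∫ r in Ioi 0, S r (B (observation S B x r)), x⟫ = _
  rw [real_inner_comm, ← integral_inner (hS.integrableOn_QopInf_integrand x)]
  exact integral_congr_ae <| ae_of_all _ fun r =>
    (inner_observation x r _).symm.trans (real_inner_self_eq_norm_sq _)

theorem IsC0SemigroupDecay.energy_identity (hS : IsC0SemigroupDecay S M ω)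
    {Qinf Qh : E →L[ℝ] E} (hQinf : ∀ x, Qinf x = QopInf S B x) (hQh : IsSqrtOf Qh Qinf)
    {t : ℝ} (ht : 0 ≤ t) (x : E) :
    (∫ σ in Ioc (-t) 0, ‖observation S B x (-σ)‖ ^ 2) + ‖Qh (adjoint (S t) x)‖ ^ 2
      = ‖Qh x‖ ^ 2 := by
  simp only [← hQh.inner_apply_self, hQinf, hS.inner_QopInf_self,
    hS.integral_observation_adjoint_sq x ht, integral_observation_neg_sq x ht]
  rw [← setIntegral_union (Ioc_disjoint_Ioi le_rfl) measurableSet_Ioi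
    ((hS.integrableOn_observation_sq x).mono_set Ioc_subset_Ioi_self)
    ((hS.integrableOn_observation_sq x).mono_set (Ioi_subset_Ioi ht)), Ioc_union_Ioi_eq_Ioi ht]

variable {t : ℝ}

theorem mapsTo_neg_Ioc : MapsTo Neg.neg (Ioc (-t) 0) (Ici 0) :=
  fun _ hσ => mem_Ici.2 (neg_nonneg.2 hσ.2)

theorem IsC0SemigroupDecay.memLp_observation_neg (hS : IsC0SemigroupDecay S M ω) (x : E) :
    MemLp (fun σ => observation S B x (-σ)) 2 (volume.restrict (Ioc (-t) 0)) := by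
  refine MemLp.of_bound (hS.aestronglyMeasurable_observation measurableSet_Ioc
    continuousOn_neg mapsTo_neg_Ioc x) (‖B‖ * (M * ‖x‖)) ?_
  filter_upwards [ae_restrict_mem measurableSet_Ioc] with σ hσ
  exact (norm_observation_le x (-σ)).trans
    (by gcongr; exact hS.norm_le_const (neg_nonneg.2 hσ.2))

theorem IsC0SemigroupDecay.inner_integral_control (hS : IsC0SemigroupDecay S M ω) {u : ℝ → F}
    (hu : MemLp u 2 (volume.restrict (Ioc (-t) 0))) (x : E) :
    ⟪∫ σ in Ioc (-t) 0, S (-σ) (B (u σ)), x⟫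
      = ∫ σ in Ioc (-t) 0, ⟪u σ, observation S B x (-σ)⟫ := by
  rw [real_inner_comm, ← integral_inner (hS.integrable_apply measurableSet_Ioc continuousOn_neg
    mapsTo_neg_Ioc (B.integrable_comp (hu.integrable one_le_two)))]
  exact integral_congr_ae <| ae_of_all _ fun σ =>
    (inner_observation x (-σ) (u σ)).symm.trans (real_inner_comm _ _)

end Semigroup

section ReachableSet

variable {E F : Type*} [NormedAddCommGroup E] [NormedSpace ℝ E] [NormedAddCommGroup F]
  [NormedSpace ℝ F]

def reachableSet (S : ℝ → E →L[ℝ] E) (B : F →L[ℝ] E) (Qh : E →L[ℝ] E) (t : ℝ) : Set E :=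
  {x : E | ∃ z ∈ Set.range Qh, ∃ u : ℝ → F,
    MemLp u 2 (volume.restrict (Ioc (-t) (0:ℝ))) ∧
    x = S t z + ∫ σ in Ioc (-t) (0:ℝ), S (-σ) (B (u σ))}

def reachMap (S : ℝ → E →L[ℝ] E) (B : F →L[ℝ] E) (Qh : E →L[ℝ] E) (t : ℝ)
    (p : WithLp 2 (Lp F 2 (volume.restrict (Ioc (-t) (0:ℝ))) × E)) : E :=
  (∫ σ in Ioc (-t) 0, S (-σ) (B ((WithLp.ofLp p).1 σ))) + S t (Qh (WithLp.ofLp p).2)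

theorem reachableSet_eq_range_reachMap (S : ℝ → E →L[ℝ] E) (B : F →L[ℝ] E) (Qh : E →L[ℝ] E)
    (t : ℝ) : reachableSet S B Qh t = range (reachMap S B Qh t) := by
  ext x
  constructor
  · rintro ⟨_, ⟨z, rfl⟩, u, hu, rfl⟩
    refine ⟨WithLp.toLp 2 (hu.toLp u, z), ?_⟩
    rw [reachMap, add_comm]
    congr 1
    exact integral_congr_ae (hu.coeFn_toLp.mono fun σ hσ => by simp [hσ])
  · rintro ⟨p, rfl⟩
    exact ⟨_, ⟨(WithLp.ofLp p).2, rfl⟩, (WithLp.ofLp p).1, Lp.memLp _, add_comm _ _⟩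

end ReachableSet

section ReachMap

variable {E F : Type*} [NormedAddCommGroup E] [InnerProductSpace ℝ E] [CompleteSpace E]
  [TopologicalSpace.SeparableSpace E] [NormedAddCommGroup F] [InnerProductSpace ℝ F]
  [CompleteSpace F] {S : ℝ → E →L[ℝ] E} {M ω : ℝ} {B : F →L[ℝ] E} {t : ℝ}

def IsC0SemigroupDecay.observationLp (hS : IsC0SemigroupDecay S M ω) (B : F →L[ℝ] E) (t : ℝ) :
    E →ₗ[ℝ] Lp F 2 (volume.restrict (Ioc (-t) 0)) where
  toFun x := (hS.memLp_observation_neg (B := B) x).toLp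
  map_add' x y := by
    rw [← MemLp.toLp_add]
    exact MemLp.toLp_congr _ _ (ae_of_all _ fun σ => by simp [observation])
  map_smul' c x := by
    rw [RingHom.id_apply, ← MemLp.toLp_const_smul]
    exact MemLp.toLp_congr _ _ (ae_of_all _ fun σ => by simp [observation])

theorem IsC0SemigroupDecay.coeFn_observationLp (hS : IsC0SemigroupDecay S M ω) (x : E) :
    hS.observationLp B t x =ᵐ[volume.restrict (Ioc (-t) 0)] fun σ => observation S B x (-σ) :=
  MemLp.coeFn_toLp (hS.memLp_observation_neg x)

def IsC0SemigroupDecay.reachMapAdjoint (hS : IsC0SemigroupDecay S M ω) (B : F →L[ℝ] E) (t : ℝ)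
    (Qh : E →L[ℝ] E) : E →ₗ[ℝ] WithLp 2 (Lp F 2 (volume.restrict (Ioc (-t) (0:ℝ))) × E) :=
  (WithLp.linearEquiv 2 ℝ _).symm.toLinearMap ∘ₗ
    (hS.observationLp B t).prod (Qh ∘L adjoint (S t)).toLinearMap

theorem IsC0SemigroupDecay.reachMapAdjoint_apply (hS : IsC0SemigroupDecay S M ω) (Qh : E →L[ℝ] E)
    (x : E) : hS.reachMapAdjoint B t Qh x =
      WithLp.toLp 2 (hS.observationLp B t x, Qh (adjoint (S t) x)) :=
  rfl

theorem IsC0SemigroupDecay.inner_reachMap (hS : IsC0SemigroupDecay S M ω) {Qh : E →L[ℝ] E}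
    (hQh : IsSelfAdjoint Qh) (p : WithLp 2 (Lp F 2 (volume.restrict (Ioc (-t) (0:ℝ))) × E))
    (x : E) : ⟪reachMap S B Qh t p, x⟫ = ⟪p, hS.reachMapAdjoint B t Qh x⟫ := by
  rw [reachMap, inner_add_left, hS.inner_integral_control (Lp.memLp _), ← adjoint_inner_right]
  simp only [hS.reachMapAdjoint_apply, WithLp.prod_inner_apply, L2.inner_def]
  congr 1
  · refine integral_congr_ae ?_
    filter_upwards [hS.coeFn_observationLp (B := B) x] with σ hσ
    rw [hσ]
  · exact hQh.isSymmetric _ _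

theorem IsC0SemigroupDecay.norm_reachMapAdjoint (hS : IsC0SemigroupDecay S M ω)
    {Qinf Qh : E →L[ℝ] E} (hQinf : ∀ x, Qinf x = QopInf S B x) (hQh : IsSqrtOf Qh Qinf)
    (ht : 0 ≤ t) (x : E) : ‖hS.reachMapAdjoint B t Qh x‖ = ‖Qh x‖ := by
  rw [← sq_eq_sq₀ (norm_nonneg _) (norm_nonneg _), ← hS.energy_identity hQinf hQh ht x,
    ← real_inner_self_eq_norm_sq]
  simp only [hS.reachMapAdjoint_apply, WithLp.prod_inner_apply, L2.inner_def,
    real_inner_self_eq_norm_sq]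
  congr 1
  refine integral_congr_ae ?_
  filter_upwards [hS.coeFn_observationLp (B := B) x] with σ hσ
  rw [hσ]

theorem IsC0SemigroupDecay.reachableSet_eq_range_sqrt (hS : IsC0SemigroupDecay S M ω)
    {Qinf Qh : E →L[ℝ] E} (hQinf : ∀ x, Qinf x = QopInf S B x) (hQh : IsSqrtOf Qh Qinf)
    (ht : 0 ≤ t) : reachableSet S B Qh t = range Qh := by
  rw [reachableSet_eq_range_reachMap]
  exact range_eq_range_of_norm_eq _ _ (hS.inner_reachMap hQh.1) Qh.toLinearMap Qh
    hQh.1.isSymmetric (hS.norm_reachMapAdjoint hQinf hQh ht)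

end ReachMap

theorem statement1_general
    (S : ℝ → X →L[ℝ] X) (M ω : ℝ) (hS : IsC0SemigroupDecay S M ω)
    (B : U →L[ℝ] X)
    (Qinf : X →L[ℝ] X) (hQinf : ∀ x, Qinf x = QopInf S B x)
    (Qh : X →L[ℝ] X) (hQh : IsSqrtOf Qh Qinf)
    (T₀ : ℝ)
    (QTh : X →L[ℝ] X) :
    (∀ t > (0:ℝ),
      {x : X | ∃ z ∈ Set.range Qh, ∃ u : ℝ → U,
          MemLp u 2 (volume.restrict (Ioc (-t) (0:ℝ))) ∧
          x = S t z + ∫ σ in Ioc (-t) (0:ℝ), S (-σ) (B (u σ))} ⊆ Set.range Qh) ∧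
    (Set.range (S T₀) ⊆ Set.range QTh →
      ∀ t > (0:ℝ), T₀ ≤ t →
        {x : X | ∃ z ∈ Set.range Qh, ∃ u : ℝ → U,
            MemLp u 2 (volume.restrict (Ioc (-t) (0:ℝ))) ∧
            x = S t z + ∫ σ in Ioc (-t) (0:ℝ), S (-σ) (B (u σ))} = Set.range Qh) := by
  have reachable_eq (t : ℝ) (ht : 0 < t) := hS.reachableSet_eq_range_sqrt hQinf hQh ht.le
  exact ⟨fun t ht => (reachable_eq t ht).subset, fun _ t ht _ => reachable_eq t ht⟩

/-- For `t > 0`, the reachable set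
`R̄_{[-t,0]} = { e^{tA}z + ∫_{-t}^0 e^{-σA} B u(σ) dσ : z ∈ H, u ∈ L²(-t,0;U) }` satisfies
`R̄_{[-t,0]} ⊆ H`; moreover, under the null controllability hypothesis,
`R̄_{[-t,0]} = H` for every `t ≥ T₀`. Here `H = R(Q_∞^{1/2})`. -/
theorem statement1
    (S : ℝ → X →L[ℝ] X) (M ω : ℝ) (hS : IsC0SemigroupDecay S M ω)
    (B : U →L[ℝ] X)
    (Qinf : X →L[ℝ] X) (hQinf : ∀ x, Qinf x = QopInf S B x)
    (Qh : X →L[ℝ] X) (hQh : IsSqrtOf Qh Qinf)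
    (T₀ : ℝ) (hT₀ : 0 ≤ T₀)
    (QT : X →L[ℝ] X) (hQT : ∀ x, QT x = Qop S B T₀ x)
    (QTh : X →L[ℝ] X) (hQTh : IsSqrtOf QTh QT) :
    (∀ t > (0:ℝ),
      {x : X | ∃ z ∈ Set.range Qh, ∃ u : ℝ → U,
          MemLp u 2 (volume.restrict (Ioc (-t) (0:ℝ))) ∧
          x = S t z + ∫ σ in Ioc (-t) (0:ℝ), S (-σ) (B (u σ))} ⊆ Set.range Qh) ∧
    (Set.range (S T₀) ⊆ Set.range QTh →
      ∀ t > (0:ℝ), T₀ ≤ t →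
        {x : X | ∃ z ∈ Set.range Qh, ∃ u : ℝ → U,
            MemLp u 2 (volume.restrict (Ioc (-t) (0:ℝ))) ∧
            x = S t z + ∫ σ in Ioc (-t) (0:ℝ), S (-σ) (B (u σ))} = Set.range Qh) :=
  statement1_general S M ω hS B Qinf hQinf Qh hQh T₀ QTh
end
end

section
/- Under the commuting-case hypothesis, any solution P of the commuting-case ARE satisfies the symmetry identity ⟨A₀x, A₀Pz⟩_H = ⟨A₀Px, A₀z⟩_H for all x, z ∈ D^P. -/
open MeasureTheory Filter Topology Set ContinuousLinearMap
open scoped ENNReal NNReal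

noncomputable section

local notation "⟪" x ", " y "⟫" => @inner ℝ _ _ x y

variable {X U : Type*}
  [NormedAddCommGroup X] [InnerProductSpace ℝ X] [CompleteSpace X]
  [NormedAddCommGroup U] [InnerProductSpace ℝ U] [CompleteSpace U]
  [TopologicalSpace.SeparableSpace X] [TopologicalSpace.SeparableSpace U]

/-- `A₀` (with domain `domA0`) is the generator of the restriction of the semigroup `S`
to `H`, i.e. the infinitesimal generator with respect to the `H`-norm `‖Qih ·‖`. -/
def IsGeneratorH (S : ℝ → X →L[ℝ] X) (Qih : X → X) (Hs : Set X)
    (domA0 : Set X) (A0 : X → X) : Prop :=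
  (∀ x : X, x ∈ domA0 ↔ x ∈ Hs ∧ ∃ y ∈ Hs,
      Tendsto (fun h : ℝ => ‖Qih (h⁻¹ • (S h x - x) - y)‖) (𝓝[>] (0:ℝ)) (𝓝 0)) ∧
  ∀ x ∈ domA0, A0 x ∈ Hs ∧
    Tendsto (fun h : ℝ => ‖Qih (h⁻¹ • (S h x - x) - A0 x)‖) (𝓝[>] (0:ℝ)) (𝓝 0)

/-- Commuting-case hypothesis: the generator `A` is selfadjoint, `0 ∈ ρ(A)`, `A` commutes
with `BB*`, and `BB*` is coercive with constant `μ`. -/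
structure CommCaseHyp (S : ℝ → X →L[ℝ] X) (B : U →L[ℝ] X)
    (domA : Set X) (A : X → X) (μ : ℝ) : Prop where
  gen : IsGenerator S domA A
  symm : ∀ x ∈ domA, ∀ y ∈ domA, ⟪A x, y⟫ = ⟪x, A y⟫
  selfadj : ∀ y w : X, (∀ x ∈ domA, ⟪A x, y⟫ = ⟪x, w⟫) → y ∈ domA
  inv : ∃ Ainv : X →L[ℝ] X,
    (∀ x : X, Ainv x ∈ domA ∧ A (Ainv x) = x) ∧ ∀ x ∈ domA, Ainv (A x) = x
  comm : ∀ x ∈ domA, B (adjoint B x) ∈ domA ∧ A (B (adjoint B x)) = B (adjoint B (A x))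
  mu_pos : 0 < μ
  coercive : ∀ x : X, μ * ‖x‖ ≤ ‖adjoint B x‖

/-- The set `D^P = {x ∈ D(A₀) : Px ∈ D(A₀)}`. -/
def DPset (domA0 : Set X) (P : X → X) : Set X := {x ∈ domA0 | P x ∈ domA0}

/-- `P` is a solution of the commuting-case ARE:
`D^P` is dense in `H` and `0 = -⟨A₀x,Py⟩_H - ⟨Px,A₀y⟩_H + 2⟨A₀Px,Py⟩_H` on `D^P`. -/
def IsCommARESol (Qih : X → X) (Hs domA0 : Set X) (A0 P : X → X) : Prop :=
  (∀ x ∈ Hs, ∀ ε > (0:ℝ), ∃ z ∈ DPset domA0 P, ‖Qih (x - z)‖ < ε) ∧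
  ∀ x ∈ DPset domA0 P, ∀ y ∈ DPset domA0 P,
    (0:ℝ) = -(hInner Qih (A0 x) (P y)) - hInner Qih (P x) (A0 y)
      + 2 * hInner Qih (A0 (P x)) (P y)

/-!
The semigroup `S t = e^{tA}` of a selfadjoint generator is selfadjoint, and since `A` commutes
with `BB*` so does `S t`; hence `S t` commutes with `Q_∞ = Q_∞^{1/2} Q_∞^{1/2}`. A doubling
argument then gives `‖Q_∞^{1/2} S t y‖ ≤ ‖Q_∞^{1/2} y‖`, so `S t` maps `H` into itself and is
selfadjoint for the `H`-inner product; consequently `A₀` is symmetric in `H`. Testing the ARE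
against the dense set `D^P` yields `P A₀ u = 2 P A₀ P u - A₀ P u` for `u ∈ D^P`, and the claimed
identity follows from two instances of this by linear algebra, using the symmetry of `P`.
-/

theorem le_of_sq_le_mul_succ {a : ℕ → ℝ} {c K : ℝ} (ha : ∀ n, 0 ≤ a n) (hc : 0 ≤ c)
    (hrec : ∀ n, a n ^ 2 ≤ c * a (n + 1)) (hK : ∀ n, a n ≤ K) : a 0 ≤ c := by
  rcases hc.eq_or_lt with rfl | hc
  · nlinarith [hrec 0, ha 0]
  have hpow : ∀ n, c * a 0 ^ 2 ^ n ≤ c ^ 2 ^ n * a n := by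
    intro n
    induction n with
    | zero => simp
    | succ n ih =>
      refine le_of_mul_le_mul_left ?_ hc
      calc c * (c * a 0 ^ 2 ^ (n + 1)) = (c * a 0 ^ 2 ^ n) ^ 2 := by ring
        _ ≤ (c ^ 2 ^ n * a n) ^ 2 := pow_le_pow_left₀ (mul_nonneg hc.le (pow_nonneg (ha 0) _)) ih 2
        _ = c ^ 2 ^ (n + 1) * a n ^ 2 := by ring
        _ ≤ c ^ 2 ^ (n + 1) * (c * a (n + 1)) := by gcongr; exact hrec n
        _ = c * (c ^ 2 ^ (n + 1) * a (n + 1)) := by ring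
  by_contra! hca
  have hq : 1 < a 0 / c := (one_lt_div hc).2 hca
  obtain ⟨n, hn⟩ := pow_unbounded_of_one_lt (K / c) hq
  have hbound : (a 0 / c) ^ 2 ^ n ≤ K / c := by
    rw [div_pow, div_le_div_iff₀ (by positivity) hc]
    nlinarith [hpow n, hK n, pow_pos hc (2 ^ n)]
  exact (hn.trans_le ((pow_le_pow_right₀ hq.le Nat.lt_two_pow_self.le).trans hbound)).false

section CommuteWithSquare

variable {E : Type*} [NormedAddCommGroup E] [InnerProductSpace ℝ E] [CompleteSpace E]
  {R T : E →L[ℝ] E}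

theorem IsSelfAdjoint.inner_apply_left (hT : IsSelfAdjoint T) (x y : E) : ⟪T x, y⟫ = ⟪x, T y⟫ :=
  hT.isSymmetric x y

theorem sq_norm_apply_apply_le (hR : IsSelfAdjoint R) (hT : IsSelfAdjoint T)
    (hTR : Commute T (R * R)) (y : E) :
    ‖R (T y)‖ ^ 2 ≤ ‖R y‖ * ‖R (T (T y))‖ := by
  have hcomm : T (R (R y)) = R (R (T y)) := DFunLike.congr_fun hTR.eq y
  calc ‖R (T y)‖ ^ 2 = ⟪R y, R (T (T y))⟫ := by
        rw [← real_inner_self_eq_norm_sq, ← hR.inner_apply_left, ← hcomm, hT.inner_apply_left,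
          hR.inner_apply_left]
    _ ≤ ‖R y‖ * ‖R (T (T y))‖ := real_inner_le_norm _ _

/-- A substitute for "`T` commutes with `R = √(R * R)`", for want of a functional calculus on
real operators: iterate `sq_norm_apply_apply_le` along `T ^ 2 ^ n`. -/
theorem norm_apply_apply_le_of_commute_mul_self (hR : IsSelfAdjoint R) (hT : IsSelfAdjoint T)
    (hTR : Commute T (R * R)) {C : ℝ} (hC : ∀ n : ℕ, ‖T ^ n‖ ≤ C) (y : E) :
    ‖R (T y)‖ ≤ ‖R y‖ := by
  have hrec : ∀ n : ℕ, ‖R ((T ^ 2 ^ n) y)‖ ^ 2 ≤ ‖R y‖ * ‖R ((T ^ 2 ^ (n + 1)) y)‖ := by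
    intro n
    have hsq : (T ^ 2 ^ n) ((T ^ 2 ^ n) y) = (T ^ 2 ^ (n + 1)) y := by
      rw [pow_succ, pow_mul, sq]; rfl
    simpa only [hsq] using sq_norm_apply_apply_le hR (hT.pow (2 ^ n)) (hTR.pow_left (2 ^ n)) y
  have hK : ∀ n : ℕ, ‖R ((T ^ 2 ^ n) y)‖ ≤ ‖R‖ * (C * ‖y‖) := fun n =>
    (R.le_opNorm _).trans (mul_le_mul_of_nonneg_left
      (((T ^ 2 ^ n).le_opNorm y).trans (mul_le_mul_of_nonneg_right (hC _) (norm_nonneg y)))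
      (norm_nonneg R))
  simpa using le_of_sq_le_mul_succ (fun n => norm_nonneg _) (norm_nonneg _) hrec hK

theorem exists_tendsto_apply_apply_of_commute_mul_self (hR : IsSelfAdjoint R)
    (hT : IsSelfAdjoint T) (hTR : Commute T (R * R)) {C : ℝ} (hC : ∀ n : ℕ, ‖T ^ n‖ ≤ C)
    {z : ℕ → E} {w : E} (hz : Tendsto (fun n => R (z n)) atTop (𝓝 w)) :
    ∃ c, Tendsto (fun n => R (T (z n))) atTop (𝓝 c) ∧ R c = T (R w) := by
  have hcauchy : CauchySeq fun n => R (T (z n)) := by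
    refine Metric.cauchySeq_iff.2 fun ε hε => ?_
    obtain ⟨N, hN⟩ := Metric.cauchySeq_iff.1 hz.cauchySeq ε hε
    refine ⟨N, fun m hm n hn => ?_⟩
    calc dist (R (T (z m))) (R (T (z n))) = ‖R (T (z m - z n))‖ := by
          rw [dist_eq_norm, map_sub, map_sub]
      _ ≤ ‖R (z m - z n)‖ := norm_apply_apply_le_of_commute_mul_self hR hT hTR hC _
      _ < ε := by rw [map_sub, ← dist_eq_norm]; exact hN m hm n hn
  obtain ⟨c, hc⟩ := cauchySeq_tendsto_of_complete hcauchy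
  refine ⟨c, hc, tendsto_nhds_unique ((R.continuous.tendsto c).comp hc) ?_⟩
  have hcomm : ∀ n, T (R (R (z n))) = R (R (T (z n))) := fun n => DFunLike.congr_fun hTR.eq _
  simpa [Function.comp_def, hcomm] using ((T.comp R).continuous.tendsto w).comp hz

end CommuteWithSquare

section PseudoInverse

variable {E : Type*} [NormedAddCommGroup E] [InnerProductSpace ℝ E] {R : E →L[ℝ] E} {Qih : E → E}

theorem ContinuousLinearMap.sub_mem_range (R : E →L[ℝ] E) {y y' : E} (hy : y ∈ Set.range R)
    (hy' : y' ∈ Set.range R) : y - y' ∈ Set.range R :=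
  (LinearMap.range (R : E →ₗ[ℝ] E)).sub_mem hy hy'

theorem ContinuousLinearMap.smul_mem_range (R : E →L[ℝ] E) (a : ℝ) {y : E}
    (hy : y ∈ Set.range R) : a • y ∈ Set.range R :=
  (LinearMap.range (R : E →ₗ[ℝ] E)).smul_mem a hy

theorem hInner_comm (Qih : E → E) (x y : E) : hInner Qih x y = hInner Qih y x :=
  real_inner_comm _ _

namespace IsPseudoInvOf

theorem apply_eq (hQih : IsPseudoInvOf Qih R) {c : E}
    (hc : c ∈ (LinearMap.ker (R : E →ₗ[ℝ] E))ᗮ) : Qih (R c) = c := by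
  obtain ⟨hmem, hR⟩ := hQih (R c) ⟨c, rfl⟩
  have hker : Qih (R c) - c ∈ LinearMap.ker (R : E →ₗ[ℝ] E) := by
    simp [LinearMap.mem_ker, hR]
  exact sub_eq_zero.1 (Submodule.disjoint_def.1 (Submodule.orthogonal_disjoint _) _ hker
    (Submodule.sub_mem _ hmem hc))

theorem map_sub (hQih : IsPseudoInvOf Qih R) {y y' : E} (hy : y ∈ Set.range R)
    (hy' : y' ∈ Set.range R) : Qih (y - y') = Qih y - Qih y' := by
  obtain ⟨hm, hR⟩ := hQih y hy
  obtain ⟨hm', hR'⟩ := hQih y' hy'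
  have h := hQih.apply_eq (Submodule.sub_mem _ hm hm')
  rwa [_root_.map_sub, hR, hR'] at h

theorem map_smul (hQih : IsPseudoInvOf Qih R) (a : ℝ) {y : E} (hy : y ∈ Set.range R) :
    Qih (a • y) = a • Qih y := by
  obtain ⟨hm, hR⟩ := hQih y hy
  have h := hQih.apply_eq (Submodule.smul_mem _ a hm)
  rwa [_root_.map_smul, hR] at h

theorem hInner_sub_left (hQih : IsPseudoInvOf Qih R) {y y' : E} (hy : y ∈ Set.range R)
    (hy' : y' ∈ Set.range R) (v : E) :
    hInner Qih (y - y') v = hInner Qih y v - hInner Qih y' v := by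
  simp only [hInner, hQih.map_sub hy hy', inner_sub_left]

theorem hInner_smul_left (hQih : IsPseudoInvOf Qih R) (a : ℝ) {y : E} (hy : y ∈ Set.range R)
    (v : E) : hInner Qih (a • y) v = a * hInner Qih y v := by
  simp only [hInner, hQih.map_smul a hy, real_inner_smul_left]

theorem eq_zero_of_hInner_eq_zero (hQih : IsPseudoInvOf Qih R) {D : Set E}
    (hD : ∀ x ∈ Set.range R, ∀ ε > (0:ℝ), ∃ z ∈ D, ‖Qih (x - z)‖ < ε)
    (hDR : D ⊆ Set.range R) {w : E} (hw : w ∈ Set.range R)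
    (hperp : ∀ v ∈ D, hInner Qih w v = 0) : w = 0 := by
  suffices Qih w = 0 by rw [← (hQih w hw).2, this, map_zero]
  by_contra hne
  obtain ⟨v, hv, hwv⟩ := hD w hw ‖Qih w‖ (norm_pos_iff.2 hne)
  have hsplit : ⟪Qih w, Qih w⟫ = ⟪Qih (w - v), Qih w⟫ := by
    have hvw : ⟪Qih v, Qih w⟫ = 0 := (hInner_comm Qih v w).trans (hperp v hv)
    rw [hQih.map_sub hw (hDR hv), inner_sub_left, hvw, sub_zero]
  have := real_inner_le_norm (Qih (w - v)) (Qih w)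
  rw [← hsplit, real_inner_self_eq_norm_mul_norm] at this
  nlinarith [norm_pos_iff.2 hne]

end IsPseudoInvOf

variable [CompleteSpace E]

theorem IsSelfAdjoint.mem_orthogonal_ker_iff (hR : IsSelfAdjoint R) {x : E} :
    x ∈ (LinearMap.ker (R : E →ₗ[ℝ] E))ᗮ ↔ x ∈ closure (Set.range R) := by
  rw [ContinuousLinearMap.orthogonal_ker, hR.adjoint_eq, ← SetLike.mem_coe,
    Submodule.topologicalClosure_coe]
  rfl

namespace IsPseudoInvOf

variable {T : E →L[ℝ] E}

theorem exists_tendsto_apply (hQih : IsPseudoInvOf Qih R) (hR : IsSelfAdjoint R) {u : E}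
    (hu : u ∈ Set.range R) : ∃ z : ℕ → E, Tendsto (fun n => R (z n)) atTop (𝓝 (Qih u)) := by
  obtain ⟨y, hyR, hy⟩ := mem_closure_iff_seq_limit.1 (hR.mem_orthogonal_ker_iff.1 (hQih u hu).1)
  choose z hz using hyR
  exact ⟨z, by simpa only [hz] using hy⟩

theorem mem_range_and_tendsto_of_commute_mul_self (hQih : IsPseudoInvOf Qih R)
    (hR : IsSelfAdjoint R) (hT : IsSelfAdjoint T) (hTR : Commute T (R * R)) {C : ℝ}
    (hC : ∀ n : ℕ, ‖T ^ n‖ ≤ C) {u : E} (hu : u ∈ Set.range R) {z : ℕ → E}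
    (hz : Tendsto (fun n => R (z n)) atTop (𝓝 (Qih u))) :
    T u ∈ Set.range R ∧ Tendsto (fun n => R (T (z n))) atTop (𝓝 (Qih (T u))) := by
  obtain ⟨c, hc, hRc⟩ := exists_tendsto_apply_apply_of_commute_mul_self hR hT hTR hC hz
  rw [(hQih u hu).2] at hRc
  have hc_mem : c ∈ (LinearMap.ker (R : E →ₗ[ℝ] E))ᗮ :=
    hR.mem_orthogonal_ker_iff.2 (mem_closure_of_tendsto hc (.of_forall fun n => ⟨_, rfl⟩))
  exact ⟨⟨c, hRc⟩, by rwa [← hRc, hQih.apply_eq hc_mem]⟩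

theorem apply_mem_range_of_commute_mul_self (hQih : IsPseudoInvOf Qih R)
    (hR : IsSelfAdjoint R) (hT : IsSelfAdjoint T) (hTR : Commute T (R * R)) {C : ℝ}
    (hC : ∀ n : ℕ, ‖T ^ n‖ ≤ C) {u : E} (hu : u ∈ Set.range R) : T u ∈ Set.range R :=
  have ⟨_, hz⟩ := hQih.exists_tendsto_apply hR hu
  (hQih.mem_range_and_tendsto_of_commute_mul_self hR hT hTR hC hu hz).1

theorem hInner_apply_comm_of_commute_mul_self (hQih : IsPseudoInvOf Qih R)
    (hR : IsSelfAdjoint R) (hT : IsSelfAdjoint T) (hTR : Commute T (R * R)) {C : ℝ}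
    (hC : ∀ n : ℕ, ‖T ^ n‖ ≤ C) {u v : E} (hu : u ∈ Set.range R) (hv : v ∈ Set.range R) :
    hInner Qih (T u) v = hInner Qih u (T v) := by
  have hTu := hQih.apply_mem_range_of_commute_mul_self hR hT hTR hC hu
  obtain ⟨z, hz⟩ := hQih.exists_tendsto_apply hR hv
  have hTz := (hQih.mem_range_and_tendsto_of_commute_mul_self hR hT hTR hC hv hz).2
  have heq : ∀ n, ⟪Qih (T u), R (z n)⟫ = ⟪Qih u, R (T (z n))⟫ := fun n => by
    rw [← hR.inner_apply_left, (hQih _ hTu).2, hT.inner_apply_left,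
      ← hR.inner_apply_left (Qih u), (hQih u hu).2]
  exact tendsto_nhds_unique ((tendsto_const_nhds.inner hz).congr heq)
    (tendsto_const_nhds.inner hTz)

end IsPseudoInvOf

end PseudoInverse

theorem hasDerivWithinAt_Ici_of_tendsto_slope {F : Type*} [NormedAddCommGroup F]
    [NormedSpace ℝ F] {f : ℝ → F} {a : ℝ} {L : F}
    (hf : Tendsto (fun h : ℝ => h⁻¹ • (f (a + h) - f a)) (𝓝[>] 0) (𝓝 L)) :
    HasDerivWithinAt f L (Ici a) a := by
  rw [hasDerivWithinAt_iff_tendsto_slope, Ici_sdiff_left]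
  have hmap : 𝓝[>] a = Filter.map (fun h => a + h) (𝓝[>] 0) := by simp
  rw [hmap, tendsto_map'_iff]
  refine hf.congr fun h => ?_
  simp [slope_def_module]

section Semigroup

variable {E : Type*} [NormedAddCommGroup E] [InnerProductSpace ℝ E]
  {S : ℝ → E →L[ℝ] E} {M ω : ℝ} {domA : Set E} {A : E → E}

namespace IsC0SemigroupDecay

theorem opNorm_le_const (hS : IsC0SemigroupDecay S M ω) {t : ℝ} (ht : 0 ≤ t) : ‖S t‖ ≤ M :=
  (hS.norm_le t ht).trans (mul_le_of_le_one_right hS.M_pos.le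
    (Real.exp_le_one_iff.2 (by nlinarith [hS.omega_pos])))

theorem apply_apply (hS : IsC0SemigroupDecay S M ω) {s t : ℝ} (hs : 0 ≤ s) (ht : 0 ≤ t)
    (x : E) : S s (S t x) = S (s + t) x := by
  rw [hS.map_add s t hs ht]; rfl

theorem apply_comm (hS : IsC0SemigroupDecay S M ω) {s t : ℝ} (hs : 0 ≤ s) (ht : 0 ≤ t)
    (x : E) : S s (S t x) = S t (S s x) := by
  rw [hS.apply_apply hs ht, hS.apply_apply ht hs, add_comm]

theorem pow_eq (hS : IsC0SemigroupDecay S M ω) {t : ℝ} (ht : 0 ≤ t) (n : ℕ) :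
    S t ^ n = S (n * t) := by
  induction n with
  | zero => rw [pow_zero, Nat.cast_zero, zero_mul, hS.map_zero]; rfl
  | succ n ih =>
    rw [pow_succ, ih, Nat.cast_succ, add_one_mul, hS.map_add _ _ (by positivity) ht]; rfl

theorem opNorm_pow_le (hS : IsC0SemigroupDecay S M ω) {t : ℝ} (ht : 0 ≤ t) (n : ℕ) :
    ‖S t ^ n‖ ≤ M :=
  hS.pow_eq ht n ▸ hS.opNorm_le_const (by positivity)

theorem integrableOn_apply_two_mul (hS : IsC0SemigroupDecay S M ω) (v : E) :
    IntegrableOn (fun r => S (2 * r) v) (Ioi 0) := by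
  have hcont : ContinuousOn (fun r : ℝ => S (2 * r) v) (Ioi 0) :=
    (hS.strong_cont v).comp (continuousOn_const.mul continuousOn_id)
      fun r hr => mem_Ici.2 (by have := mem_Ioi.1 hr; positivity)
  refine Integrable.mono' ((exp_neg_integrableOn_Ioi 0 (mul_pos two_pos hS.omega_pos)).const_mul
    (M * ‖v‖)) (hcont.aestronglyMeasurable measurableSet_Ioi) ?_
  filter_upwards [ae_restrict_mem measurableSet_Ioi] with r (hr : 0 < r)
  calc ‖S (2 * r) v‖ ≤ M * Real.exp (-ω * (2 * r)) * ‖v‖ :=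
        ((S _).le_opNorm v).trans (mul_le_mul_of_nonneg_right (hS.norm_le _ (by positivity))
          (norm_nonneg v))
    _ = M * ‖v‖ * Real.exp (-(2 * ω) * r) := by ring_nf

theorem tendsto_apply_sub (hS : IsC0SemigroupDecay S M ω) {c : ℝ} (hc : 0 < c) {w : ℝ → E}
    {L : E} (hw : Tendsto w (𝓝[>] 0) (𝓝 L)) :
    Tendsto (fun h => S (c - h) (w h)) (𝓝[>] 0) (𝓝 (S c L)) := by
  have hsub : Tendsto (fun h : ℝ => c - h) (𝓝[>] 0) (𝓝[Ici 0] c) := by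
    refine tendsto_nhdsWithin_of_tendsto_nhds_of_eventually_within _ ?_ ?_
    · exact ((continuous_const.sub continuous_id).tendsto' 0 c (sub_zero c)).mono_left
        nhdsWithin_le_nhds
    · filter_upwards [Ioo_mem_nhdsGT hc] with h hh
      exact sub_nonneg.2 hh.2.le
  have hL : Tendsto (fun h => S (c - h) L) (𝓝[>] 0) (𝓝 (S c L)) :=
    (hS.strong_cont L c (mem_Ici.2 hc.le)).tendsto.comp hsub
  have hdiff : Tendsto (fun h => S (c - h) (w h - L)) (𝓝[>] 0) (𝓝 0) := by
    refine squeeze_zero_norm' ?_ (by simpa using ((hw.sub_const L).norm.const_mul M))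
    filter_upwards [Ioo_mem_nhdsGT hc] with h hh
    exact ((S (c - h)).le_opNorm _).trans (mul_le_mul_of_nonneg_right
      (hS.opNorm_le_const (sub_nonneg.2 hh.2.le)) (norm_nonneg _))
  refine (zero_add (S c L) ▸ hdiff.add hL).congr fun h => ?_
  rw [← _root_.map_add, sub_add_cancel]

theorem apply_mem_domain_and_comm (hS : IsC0SemigroupDecay S M ω)
    (hgen : IsGenerator S domA A) {x : E} (hx : x ∈ domA) {t : ℝ} (ht : 0 ≤ t) :
    S t x ∈ domA ∧ A (S t x) = S t (A x) := by
  have hT : Tendsto (fun h : ℝ => h⁻¹ • (S h (S t x) - S t x)) (𝓝[>] 0) (𝓝 (S t (A x))) := by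
    refine (((S t).continuous.tendsto _).comp (hgen.2 x hx)).congr' ?_
    filter_upwards [self_mem_nhdsWithin] with h (hh : 0 < h)
    simp only [Function.comp_apply, map_smul, map_sub, hS.apply_comm hh.le ht]
  have hmem : S t x ∈ domA := (hgen.1 _).2 ⟨_, hT⟩
  exact ⟨hmem, tendsto_nhds_unique (hgen.2 _ hmem) hT⟩

theorem hasDerivWithinAt_apply (hS : IsC0SemigroupDecay S M ω)
    (hgen : IsGenerator S domA A) {x : E} (hx : x ∈ domA) {s : ℝ} (hs : 0 ≤ s) :
    HasDerivWithinAt (fun r => S r x) (S s (A x)) (Ici s) s := by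
  refine hasDerivWithinAt_Ici_of_tendsto_slope
    ((((S s).continuous.tendsto _).comp (hgen.2 x hx)).congr' ?_)
  filter_upwards [self_mem_nhdsWithin] with h (hh : 0 < h)
  simp only [Function.comp_apply, map_smul, map_sub, hS.apply_apply hs hh.le]

theorem hasDerivWithinAt_apply_sub (hS : IsC0SemigroupDecay S M ω)
    (hgen : IsGenerator S domA A) {y : E} (hy : y ∈ domA) {s t : ℝ} (hst : s < t) :
    HasDerivWithinAt (fun r => S (t - r) y) (-S (t - s) (A y)) (Ici s) s := by
  refine hasDerivWithinAt_Ici_of_tendsto_slope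
    ((hS.tendsto_apply_sub (sub_pos.2 hst) (hgen.2 y hy)).neg.congr' ?_)
  filter_upwards [Ioo_mem_nhdsGT (sub_pos.2 hst)] with h hh
  have hsplit : S (t - s) y = S (t - s - h) (S h y) := by
    rw [hS.apply_apply (by linarith [hh.2]) hh.1.le, sub_add_cancel]
  rw [hsplit, show t - (s + h) = t - s - h by ring]
  simp only [map_smul, map_sub, smul_sub, neg_sub]

/-- `s ↦ β (S s x) (S (t - s) y)` has zero right derivative on `[0, t)` when `x, y ∈ domA`. -/
theorem bilin_apply_left_eq_apply_right (hS : IsC0SemigroupDecay S M ω)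
    (hgen : IsGenerator S domA A) (hdense : Dense domA) (β : E →L[ℝ] E →L[ℝ] ℝ)
    (hβ : ∀ a ∈ domA, ∀ b ∈ domA, β (A a) b = β a (A b)) {t : ℝ} (ht : 0 ≤ t) (x y : E) :
    β (S t x) y = β x (S t y) := by
  have hdom : ∀ x ∈ domA, ∀ y ∈ domA, β (S t x) y = β x (S t y) := by
    intro x hx y hy
    have hcont : ContinuousOn (fun s => β (S s x) (S (t - s) y)) (Icc 0 t) :=
      (β.continuous.comp_continuousOn ((hS.strong_cont x).mono fun s hs => hs.1)).clm_apply
        ((hS.strong_cont y).comp (continuousOn_const.sub continuousOn_id)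
          fun s hs => sub_nonneg.2 hs.2)
    have hderiv : ∀ s ∈ Ico 0 t,
        HasDerivWithinAt (fun s => β (S s x) (S (t - s) y)) 0 (Ici s) s := by
      intro s hs
      obtain ⟨hxs, hAxs⟩ := hS.apply_mem_domain_and_comm hgen hx hs.1
      obtain ⟨hyt, hAyt⟩ := hS.apply_mem_domain_and_comm hgen hy (sub_nonneg.2 hs.2.le)
      have h := β.hasDerivWithinAt_of_bilinear (hS.hasDerivWithinAt_apply hgen hx hs.1)
        (hS.hasDerivWithinAt_apply_sub hgen hy hs.2)
      rwa [map_neg, ← hAxs, ← hAyt, hβ _ hxs _ hyt, neg_add_cancel] at h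
    simpa [hS.map_zero] using constant_of_has_deriv_right_zero hcont hderiv t (right_mem_Icc.2 ht)
  have hext := Continuous.ext_on (hdense.prod hdense)
    (β.continuous₂.comp ((S t).continuous.prodMap continuous_id))
    (β.continuous₂.comp (continuous_id.prodMap (S t).continuous))
    fun p hp => hdom p.1 hp.1 p.2 hp.2
  exact congrFun hext (x, y)

end IsC0SemigroupDecay

end Semigroup

namespace CommCaseHyp

variable {E V : Type*} [NormedAddCommGroup E] [InnerProductSpace ℝ E] [CompleteSpace E]
  [NormedAddCommGroup V] [InnerProductSpace ℝ V] [CompleteSpace V]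
  {S : ℝ → E →L[ℝ] E} {M ω : ℝ} {B : V →L[ℝ] E} {domA : Set E} {A : E → E} {μ : ℝ}

theorem dense_domain (hcc : CommCaseHyp S B domA A μ) : Dense domA := by
  obtain ⟨Ainv, hAinv, -⟩ := hcc.inv
  have hsymm : IsSelfAdjoint Ainv := ContinuousLinearMap.isSelfAdjoint_iff_isSymmetric.2
    fun z w => by
      simpa [(hAinv z).2, (hAinv w).2] using (hcc.symm _ (hAinv z).1 _ (hAinv w).1).symm
  refine Dense.mono (s₁ := Set.range Ainv) (by rintro _ ⟨z, rfl⟩; exact (hAinv z).1) ?_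
  change Dense (LinearMap.range (Ainv : E →ₗ[ℝ] E) : Set E)
  rw [Submodule.dense_iff_topologicalClosure_eq_top,
    Submodule.topologicalClosure_eq_top_iff, ContinuousLinearMap.orthogonal_range,
    hsymm.adjoint_eq, LinearMap.ker_eq_bot]
  exact Function.LeftInverse.injective fun x => (hAinv x).2

theorem isSelfAdjoint_semigroup (hcc : CommCaseHyp S B domA A μ)
    (hS : IsC0SemigroupDecay S M ω) {t : ℝ} (ht : 0 ≤ t) : IsSelfAdjoint (S t) :=
  ContinuousLinearMap.isSelfAdjoint_iff_isSymmetric.2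
    (hS.bilin_apply_left_eq_apply_right hcc.gen hcc.dense_domain (innerSL ℝ) hcc.symm ht)

theorem commute_semigroup (hcc : CommCaseHyp S B domA A μ) (hS : IsC0SemigroupDecay S M ω)
    {t : ℝ} (ht : 0 ≤ t) : Commute (S t) (B ∘L adjoint B) := by
  have hG : IsSelfAdjoint (B ∘L adjoint B) :=
    (ContinuousLinearMap.isPositive_self_comp_adjoint B).isSelfAdjoint
  have hSt := hcc.isSelfAdjoint_semigroup hS ht
  have hβ := hS.bilin_apply_left_eq_apply_right hcc.gen hcc.dense_domain
    ((innerSL ℝ).bilinearComp (ContinuousLinearMap.id ℝ E) (B ∘L adjoint B)) (fun a ha b hb => by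
      simp only [bilinearComp_apply, id_apply, innerSL_apply_apply, comp_apply]
      rw [hcc.symm a ha _ (hcc.comm b hb).1, (hcc.comm b hb).2]) ht
  refine ContinuousLinearMap.ext fun x => ext_inner_right ℝ fun y => ?_
  simp only [bilinearComp_apply, id_apply, innerSL_apply_apply] at hβ
  rw [mul_apply_eq_comp, mul_apply_eq_comp, hSt.inner_apply_left, hG.inner_apply_left, ← hβ,
    ← hG.inner_apply_left]

theorem BBstar_apply_semigroup (hcc : CommCaseHyp S B domA A μ)
    (hS : IsC0SemigroupDecay S M ω) {t : ℝ} (ht : 0 ≤ t) (x : E) :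
    B (adjoint B (S t x)) = S t (B (adjoint B x)) :=
  (DFunLike.congr_fun (hcc.commute_semigroup hS ht).eq x).symm

theorem integrand_eq (hcc : CommCaseHyp S B domA A μ) (hS : IsC0SemigroupDecay S M ω)
    {r : ℝ} (hr : 0 ≤ r) (x : E) :
    S r (B (adjoint B (adjoint (S r) x))) = S (2 * r) (B (adjoint B x)) := by
  rw [(hcc.isSelfAdjoint_semigroup hS hr).adjoint_eq, two_mul, ← hS.apply_apply hr hr,
    hcc.BBstar_apply_semigroup hS hr]

theorem commute_semigroup_QopInf (hcc : CommCaseHyp S B domA A μ)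
    (hS : IsC0SemigroupDecay S M ω) {Q : E →L[ℝ] E} (hQ : ∀ x, Q x = QopInf S B x) {t : ℝ}
    (ht : 0 ≤ t) : Commute (S t) Q := by
  refine ContinuousLinearMap.ext fun x => ?_
  change S t (Q x) = Q (S t x)
  have hint : ∀ y, QopInf S B y = ∫ r in Ioi (0:ℝ), S (2 * r) (B (adjoint B y)) := fun y =>
    setIntegral_congr_fun measurableSet_Ioi fun r hr => hcc.integrand_eq hS (le_of_lt hr) y
  rw [hQ, hQ, hint, hint, ← (S t).integral_comp_comm (hS.integrableOn_apply_two_mul _)]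
  refine setIntegral_congr_fun measurableSet_Ioi fun r (hr : 0 < r) => ?_
  rw [hS.apply_comm ht (by positivity), hcc.BBstar_apply_semigroup hS ht]

variable {Qinf Qh : E →L[ℝ] E} {Qih : E → E}

theorem commute_semigroup_mul_self (hcc : CommCaseHyp S B domA A μ)
    (hS : IsC0SemigroupDecay S M ω) (hQinf : ∀ x, Qinf x = QopInf S B x)
    (hQh : IsSqrtOf Qh Qinf) {t : ℝ} (ht : 0 ≤ t) : Commute (S t) (Qh * Qh) :=
  (show Qh * Qh = Qinf from hQh.2.2) ▸ hcc.commute_semigroup_QopInf hS hQinf ht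

theorem semigroup_apply_mem_range (hcc : CommCaseHyp S B domA A μ)
    (hS : IsC0SemigroupDecay S M ω) (hQinf : ∀ x, Qinf x = QopInf S B x)
    (hQh : IsSqrtOf Qh Qinf) (hQih : IsPseudoInvOf Qih Qh) {t : ℝ} (ht : 0 ≤ t) {y : E}
    (hy : y ∈ Set.range Qh) : S t y ∈ Set.range Qh :=
  hQih.apply_mem_range_of_commute_mul_self hQh.1 (hcc.isSelfAdjoint_semigroup hS ht)
    (hcc.commute_semigroup_mul_self hS hQinf hQh ht) (hS.opNorm_pow_le ht) hy

theorem hInner_semigroup_comm (hcc : CommCaseHyp S B domA A μ)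
    (hS : IsC0SemigroupDecay S M ω) (hQinf : ∀ x, Qinf x = QopInf S B x)
    (hQh : IsSqrtOf Qh Qinf) (hQih : IsPseudoInvOf Qih Qh) {t : ℝ} (ht : 0 ≤ t) {y v : E}
    (hy : y ∈ Set.range Qh) (hv : v ∈ Set.range Qh) :
    hInner Qih (S t y) v = hInner Qih y (S t v) :=
  hQih.hInner_apply_comm_of_commute_mul_self hQh.1 (hcc.isSelfAdjoint_semigroup hS ht)
    (hcc.commute_semigroup_mul_self hS hQinf hQh ht) (hS.opNorm_pow_le ht) hy hv

end CommCaseHyp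

section GeneratorOnH

variable {E : Type*} [NormedAddCommGroup E] [InnerProductSpace ℝ E]
  {R : E →L[ℝ] E} {Qih : E → E} {S : ℝ → E →L[ℝ] E} {domA0 : Set E} {A0 P : E → E}

theorem IsGeneratorH.tendsto_hInner (hA0 : IsGeneratorH S Qih (Set.range R) domA0 A0)
    (hQih : IsPseudoInvOf Qih R) (hSR : ∀ h > (0:ℝ), ∀ y ∈ Set.range R, S h y ∈ Set.range R)
    {w : E} (hw : w ∈ domA0) (v : E) :
    Tendsto (fun h => hInner Qih (h⁻¹ • (S h w - w)) v) (𝓝[>] 0) (𝓝 (hInner Qih (A0 w) v)) := by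
  have hwR := ((hA0.1 w).1 hw).1
  obtain ⟨hA0w, hlim⟩ := hA0.2 w hw
  rw [tendsto_iff_norm_sub_tendsto_zero]
  refine squeeze_zero_norm' ?_ (by simpa using hlim.mul_const ‖Qih v‖)
  filter_upwards [self_mem_nhdsWithin] with h hh
  rw [← hQih.hInner_sub_left (R.smul_mem_range _ (R.sub_mem_range (hSR h hh w hwR) hwR)) hA0w]
  exact (norm_norm _).trans_le (norm_inner_le_norm (𝕜 := ℝ) (Qih _) (Qih v))

theorem IsGeneratorH.hInner_symm (hA0 : IsGeneratorH S Qih (Set.range R) domA0 A0)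
    (hQih : IsPseudoInvOf Qih R) (hSR : ∀ h > (0:ℝ), ∀ y ∈ Set.range R, S h y ∈ Set.range R)
    (hS : ∀ h > (0:ℝ), ∀ y ∈ Set.range R, ∀ v ∈ Set.range R,
      hInner Qih (S h y) v = hInner Qih y (S h v))
    {w v : E} (hw : w ∈ domA0) (hv : v ∈ domA0) :
    hInner Qih (A0 w) v = hInner Qih w (A0 v) := by
  have hwR := ((hA0.1 w).1 hw).1
  have hvR := ((hA0.1 v).1 hv).1
  rw [hInner_comm Qih w]
  refine tendsto_nhds_unique (hA0.tendsto_hInner hQih hSR hw v)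
    ((hA0.tendsto_hInner hQih hSR hv w).congr' ?_)
  filter_upwards [self_mem_nhdsWithin] with h hh
  rw [hQih.hInner_smul_left _ (R.sub_mem_range (hSR h hh v hvR) hvR),
    hQih.hInner_smul_left _ (R.sub_mem_range (hSR h hh w hwR) hwR),
    hQih.hInner_sub_left (hSR h hh v hvR) hvR, hQih.hInner_sub_left (hSR h hh w hwR) hwR,
    hS h hh w hwR v hvR, hInner_comm Qih w (S h v), hInner_comm Qih w v]

end GeneratorOnH

section RiccatiAlgebra

variable {E : Type*} [NormedAddCommGroup E] [InnerProductSpace ℝ E]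
  {R : E →L[ℝ] E} {Qih : E → E} {domA0 : Set E} {A0 P : E → E}

theorem IsBddNonnegSelfAdjH.apply_mem {Hs : Set E} (hP : IsBddNonnegSelfAdjH Qih Hs P) {x : E}
    (hx : x ∈ Hs) : P x ∈ Hs :=
  hP.1 x hx

theorem IsBddNonnegSelfAdjH.hInner_apply_left {Hs : Set E} (hP : IsBddNonnegSelfAdjH Qih Hs P)
    {x y : E} (hx : x ∈ Hs) (hy : y ∈ Hs) : hInner Qih (P x) y = hInner Qih x (P y) :=
  hP.2.2.2.2.1 x hx y hy

theorem IsCommARESol.apply_generator_eq (hsol : IsCommARESol Qih (Set.range R) domA0 A0 P)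
    (hQih : IsPseudoInvOf Qih R) (hP : IsBddNonnegSelfAdjH Qih (Set.range R) P)
    (hA0R : ∀ w ∈ domA0, w ∈ Set.range R ∧ A0 w ∈ Set.range R)
    (hA0 : ∀ w ∈ domA0, ∀ v ∈ domA0, hInner Qih (A0 w) v = hInner Qih w (A0 v))
    {u : E} (hu : u ∈ DPset domA0 P) :
    P (A0 u) = (2:ℝ) • P (A0 (P u)) - A0 (P u) := by
  have ha := (hA0R u hu.1).2
  have hb := (hA0R _ hu.2).2
  have h2Pb := R.smul_mem_range 2 (hP.apply_mem hb)
  rw [eq_comm, ← sub_eq_zero, sub_sub, add_comm, ← sub_sub]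
  refine hQih.eq_zero_of_hInner_eq_zero hsol.1 (fun v hv => (hA0R v hv.1).1)
    (R.sub_mem_range (R.sub_mem_range h2Pb (hP.apply_mem ha)) hb) fun v hv => ?_
  have hvR := (hA0R v hv.1).1
  rw [hQih.hInner_sub_left (R.sub_mem_range h2Pb (hP.apply_mem ha)) hb,
    hQih.hInner_sub_left h2Pb (hP.apply_mem ha), hQih.hInner_smul_left _ (hP.apply_mem hb),
    hP.hInner_apply_left hb hvR, hP.hInner_apply_left ha hvR, hA0 _ hu.2 v hv.1]
  linarith [hsol.2 u hu v hv]

theorem hInner_eq_of_apply_eq_two_smul_sub (hQih : IsPseudoInvOf Qih R)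
    (hP : IsBddNonnegSelfAdjH Qih (Set.range R) P) {a b c d : E} (ha : a ∈ Set.range R)
    (hb : b ∈ Set.range R) (hc : c ∈ Set.range R) (hd : d ∈ Set.range R)
    (hab : P a = (2:ℝ) • P b - b) (hcd : P c = (2:ℝ) • P d - d) :
    hInner Qih a d = hInner Qih b c := by
  have expand : ∀ {y w : E}, w ∈ Set.range R → P y = (2:ℝ) • P w - w →
      ∀ v, hInner Qih (P y) v = 2 * hInner Qih (P w) v - hInner Qih w v := by
    intro y w hw h v
    rw [h, hQih.hInner_sub_left (R.smul_mem_range 2 (hP.apply_mem hw)) hw,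
      hQih.hInner_smul_left _ (hP.apply_mem hw)]
  have hPsymm : ∀ {x y : E}, x ∈ Set.range R → y ∈ Set.range R →
      hInner Qih (P x) y = hInner Qih (P y) x := fun hx hy =>
    (hP.hInner_apply_left hx hy).trans (hInner_comm Qih _ _)
  linarith [expand hb hab d, expand hb hab c, expand hd hcd a, expand hd hcd b,
    hPsymm hb hd, hPsymm hc ha, hPsymm hc hb, hPsymm hd ha, hInner_comm Qih a d,
    hInner_comm Qih b d]

end RiccatiAlgebra

/-- Under the commuting-case hypothesis, any solution `P` of the
commuting-case ARE satisfies `⟨A₀x, A₀Pz⟩_H = ⟨A₀Px, A₀z⟩_H` for all `x, z ∈ D^P`. -/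
theorem statement12
    (S : ℝ → X →L[ℝ] X) (M ω : ℝ) (hS : IsC0SemigroupDecay S M ω)
    (B : U →L[ℝ] X)
    (domA : Set X) (A : X → X) (μ : ℝ) (hcc : CommCaseHyp S B domA A μ)
    (Qinf : X →L[ℝ] X) (hQinf : ∀ x, Qinf x = QopInf S B x)
    (Qh : X →L[ℝ] X) (hQh : IsSqrtOf Qh Qinf)
    (Qih : X → X) (hQih : IsPseudoInvOf Qih Qh)
    (domA0 : Set X) (A0 : X → X)
    (hA0 : IsGeneratorH S Qih (Set.range Qh) domA0 A0)
    (P : X → X) (hP : IsBddNonnegSelfAdjH Qih (Set.range Qh) P)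
    (hsol : IsCommARESol Qih (Set.range Qh) domA0 A0 P) :
    ∀ x ∈ DPset domA0 P, ∀ z ∈ DPset domA0 P,
      hInner Qih (A0 x) (A0 (P z)) = hInner Qih (A0 (P x)) (A0 z) := by
  have hSH : ∀ h > (0:ℝ), ∀ y ∈ Set.range Qh, S h y ∈ Set.range Qh := fun h hh y hy =>
    hcc.semigroup_apply_mem_range hS hQinf hQh hQih hh.le hy
  have hA0symm : ∀ w ∈ domA0, ∀ v ∈ domA0, hInner Qih (A0 w) v = hInner Qih w (A0 v) :=
    fun w hw v hv => hA0.hInner_symm hQih hSH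
      (fun h hh y hy v hv => hcc.hInner_semigroup_comm hS hQinf hQh hQih hh.le hy hv) hw hv
  have hA0R : ∀ w ∈ domA0, w ∈ Set.range Qh ∧ A0 w ∈ Set.range Qh := fun w hw =>
    ⟨((hA0.1 w).1 hw).1, (hA0.2 w hw).1⟩
  intro x hx z hz
  exact hInner_eq_of_apply_eq_two_smul_sub hQih hP (hA0R _ hx.1).2 (hA0R _ hx.2).2
    (hA0R _ hz.1).2 (hA0R _ hz.2).2 (hsol.apply_generator_eq hQih hP hA0R hA0symm hx)
    (hsol.apply_generator_eq hQih hP hA0R hA0symm hz)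

end
end
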